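/- arXiv:1801.03216 — 6 statements merged into one kernel-verified Lean document; each statement's English description precedes it below -/
import Mathlib

section
/- Let ε ∈ (0,1) and let (u₁,u₂,u₃) be an ε-cycle for the sets (C₁,C₂,C₃) in ℝ³ with support (w₁,w₂,w₃). Writing x' ∈ ℝ² for the vector of the first two coordinates of x ∈ ℝ³, the triple (u₁',u₂',u₃') is an ε-cycle for the projected sets (C₁',C₂',C₃') in ℝ² with support (w₁',w₂',w₃'). -/
/-!
The third coordinates ("heights") of an ε-cycle obey the same ε-step recursion as the points
themselves, and every support point has height in `[-1, 1]`; solving the recursion writes the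
height of `u₃` as a convex combination of the support heights, so it lies in `[-1, 1]` as well.
Projecting onto the vertical segments `C₁`, `C₂` then keeps the height, so all heights agree and
`u₂ - w₃` is horizontal. For horizontal `u - w` the inner products `⟪v - w, u - w⟫` do not see
the third coordinate, so the variational inequalities pass to the projected sets.
-/

noncomputable section
open Real Filter

/-- ℝ³ with the Euclidean structure. -/
abbrev E3 : Type := EuclideanSpace ℝ (Fin 3)
/-- ℝ² with the Euclidean structure. -/
abbrev E2 : Type := EuclideanSpace ℝ (Fin 2)

/-- The real inner product. -/
def ip {E : Type} [NormedAddCommGroup E] [InnerProductSpace ℝ E] (x y : E) : ℝ :=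
  inner ℝ x y

/-- `w` is the metric projection of `u` onto `C`, characterised by membership
together with the variational inequality `⟪v - w, u - w⟫ ≤ 0` for all `v ∈ C`. -/
def IsProj {E : Type} [NormedAddCommGroup E] [InnerProductSpace ℝ E]
    (C : Set E) (u w : E) : Prop :=
  w ∈ C ∧ ∀ v ∈ C, inner ℝ (v - w) (u - w) ≤ (0 : ℝ)

/-- `(u₁,u₂,u₃)` is an ε-cycle for `(C₁,C₂,C₃)` with support `(w₁,w₂,w₃)`. -/
def IsCycleWithSupport {E : Type} [NormedAddCommGroup E] [InnerProductSpace ℝ E]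
    (C₁ C₂ C₃ : Set E) (ε : ℝ) (u₁ u₂ u₃ w₁ w₂ w₃ : E) : Prop :=
  IsProj C₁ u₃ w₁ ∧ IsProj C₂ u₁ w₂ ∧ IsProj C₃ u₂ w₃ ∧
    u₁ = u₃ + ε • (w₁ - u₃) ∧ u₂ = u₁ + ε • (w₂ - u₁) ∧ u₃ = u₂ + ε • (w₃ - u₂)

/-- `(u₁,u₂,u₃)` is an ε-cycle for `(C₁,C₂,C₃)`. -/
def IsCycle {E : Type} [NormedAddCommGroup E] [InnerProductSpace ℝ E]
    (C₁ C₂ C₃ : Set E) (ε : ℝ) (u₁ u₂ u₃ : E) : Prop :=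
  ∃ w₁ w₂ w₃ : E, IsCycleWithSupport C₁ C₂ C₃ ε u₁ u₂ u₃ w₁ w₂ w₃

/-- An admissible sequence: strictly increasing (on indices `k ≥ 1`), starting
at `t₁ = π/4` and converging to `π/2`. -/
def Admissible (t : ℕ → ℝ) : Prop :=
  StrictMonoOn t (Set.Ici 1) ∧ t 1 = π / 4 ∧ Tendsto t atTop (nhds (π / 2))

/-- The segment C₁ = co{(−2,2,1), (−2,2,−1)}. -/
def C1 : Set E3 := convexHull ℝ {WithLp.toLp 2 ![(-2 : ℝ), 2, 1], WithLp.toLp 2 ![(-2 : ℝ), 2, -1]}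

/-- The segment C₂ = co{(2,2,1), (2,2,−1)}. -/
def C2 : Set E3 := convexHull ℝ {WithLp.toLp 2 ![(2 : ℝ), 2, 1], WithLp.toLp 2 ![(2 : ℝ), 2, -1]}

/-- The points pₖ = (cos tₖ, sin tₖ, (−1)ᵏ). -/
def pSeq (t : ℕ → ℝ) (k : ℕ) : E3 := WithLp.toLp 2 ![Real.cos (t k), Real.sin (t k), (-1 : ℝ) ^ k]

/-- C₃ = closed convex hull of {pₖ : k ≥ 1}. -/
def C3 (t : ℕ → ℝ) : Set E3 := closure (convexHull ℝ (pSeq t '' {k | 1 ≤ k}))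

/-- a = (−2,2). -/
def aPt : E2 := WithLp.toLp 2 ![(-2 : ℝ), 2]
/-- b = (2,2). -/
def bPt : E2 := WithLp.toLp 2 ![(2 : ℝ), 2]
/-- vₖ = (cos tₖ, sin tₖ). -/
def vSeq (t : ℕ → ℝ) (k : ℕ) : E2 := WithLp.toLp 2 ![Real.cos (t k), Real.sin (t k)]
/-- C₁' = {a}. -/
def C1' : Set E2 := {aPt}
/-- C₂' = {b}. -/
def C2' : Set E2 := {bPt}
/-- C₃' = closed convex hull of {vₖ : k ≥ 1}. -/
def C3' (t : ℕ → ℝ) : Set E2 := closure (convexHull ℝ (vSeq t '' {k | 1 ≤ k}))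

/-- Projection of ℝ³ onto the xy-plane. -/
def projXY (x : E3) : E2 := WithLp.toLp 2 ![x 0, x 1]

/-- Lifting a point of the xy-plane to height `z`. -/
def liftZ (p : E2) (z : ℝ) : E3 := WithLp.toLp 2 ![p 0, p 1, z]

/-- The solid cylinder D. -/
def Dcyl : Set E3 := {x | x 0 ^ 2 + x 1 ^ 2 ≤ 1 ∧ |x 2| ≤ 1}

section InnerProductSpace

variable {E F : Type} [NormedAddCommGroup E] [InnerProductSpace ℝ E]
  [NormedAddCommGroup F] [InnerProductSpace ℝ F]

lemma isProj_singleton (a u : E) : IsProj {a} u a := by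
  refine ⟨rfl, fun v hv => ?_⟩
  rw [Set.mem_singleton_iff.mp hv, sub_self, inner_zero_left]

lemma IsProj.inner_eq_zero_of_add_smul_mem {C : Set E} {u w : E} (h : IsProj C u w) (e : E)
    (he : w + inner ℝ e (u - w) • e ∈ C) : inner ℝ e (u - w) = (0 : ℝ) := by
  have hvi := h.2 _ he
  rw [add_sub_cancel_left, real_inner_smul_left] at hvi
  exact mul_self_eq_zero.mp (le_antisymm hvi (mul_self_nonneg _))

lemma isProj_closure_convexHull_of_forall {s : Set E} {u w : E}
    (hw : w ∈ closure (convexHull ℝ s)) (hs : ∀ v ∈ s, inner ℝ (v - w) (u - w) ≤ (0 : ℝ)) :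
    IsProj (closure (convexHull ℝ s)) u w := by
  have hlin : IsLinearMap ℝ fun v : E => inner ℝ v (u - w) :=
    ⟨fun x y => inner_add_left x y _, fun c x => real_inner_smul_left x _ c⟩
  have hhalf : closure (convexHull ℝ s) ⊆ {v : E | inner ℝ v (u - w) ≤ inner ℝ w (u - w)} :=
    closure_minimal
      (convexHull_min (fun v hv => by simpa [inner_sub_left] using hs v hv)
        (convex_halfSpace_le hlin _))
      (isClosed_le (by fun_prop) continuous_const)
  exact ⟨hw, fun v hv => by simpa [inner_sub_left] using hhalf hv⟩

lemma IsProj.map_closure_convexHull {s : Set E} {u w : E}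
    (h : IsProj (closure (convexHull ℝ s)) u w) (f : E →L[ℝ] F)
    (hf : ∀ x, inner ℝ (f x) (f (u - w)) = inner ℝ x (u - w)) :
    IsProj (closure (convexHull ℝ (f '' s))) (f u) (f w) := by
  refine isProj_closure_convexHull_of_forall ?_ ?_
  · have himage := (f : E →ₗ[ℝ] F).image_convexHull s
    rw [ContinuousLinearMap.coe_coe] at himage
    rw [← himage]
    exact image_closure_subset_closure_image f.continuous ⟨w, h.1, rfl⟩
  · rintro _ ⟨v, hv, rfl⟩
    rw [← map_sub, ← map_sub, hf]
    exact h.2 v (subset_closure (subset_convexHull ℝ s hv))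

end InnerProductSpace

lemma mem_Icc_of_cycle {l r ε a₁ a₂ a₃ b₁ b₂ b₃ : ℝ} (hε : ε ∈ Set.Ioc (0 : ℝ) 1)
    (h₁ : a₁ = a₃ + ε * (b₁ - a₃)) (h₂ : a₂ = a₁ + ε * (b₂ - a₁)) (h₃ : a₃ = a₂ + ε * (b₃ - a₂))
    (hb₁ : b₁ ∈ Set.Icc l r) (hb₂ : b₂ ∈ Set.Icc l r) (hb₃ : b₃ ∈ Set.Icc l r) :
    a₃ ∈ Set.Icc l r := by
  obtain ⟨hε₀, hε₁⟩ := hε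
  have key : a₃ * (1 - (1 - ε) ^ 3) = ε * ((1 - ε) ^ 2 * b₁ + (1 - ε) * b₂ + b₃) := by
    linear_combination h₃ + (1 - ε) * h₂ + (1 - ε) ^ 2 * h₁
  have hpos : 0 < 1 - (1 - ε) ^ 3 := by nlinarith
  have c1 : 0 ≤ ε * (1 - ε) ^ 2 := by positivity
  have c2 : 0 ≤ ε * (1 - ε) := mul_nonneg hε₀.le (by linarith)
  obtain ⟨hl₁, hr₁⟩ := hb₁
  obtain ⟨hl₂, hr₂⟩ := hb₂
  obtain ⟨hl₃, hr₃⟩ := hb₃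
  constructor
  · refine le_of_mul_le_mul_right ?_ hpos
    linarith [mul_le_mul_of_nonneg_left hl₁ c1, mul_le_mul_of_nonneg_left hl₂ c2,
      mul_le_mul_of_nonneg_left hl₃ hε₀.le]
  · refine le_of_mul_le_mul_right ?_ hpos
    linarith [mul_le_mul_of_nonneg_left hr₁ c1, mul_le_mul_of_nonneg_left hr₂ c2,
      mul_le_mul_of_nonneg_left hr₃ hε₀.le]

lemma map_cycle_step {E F : Type} [AddCommGroup E] [Module ℝ E] [AddCommGroup F] [Module ℝ F]
    (f : E →ₗ[ℝ] F) {ε : ℝ} {u u' w : E} (h : u' = u + ε • (w - u)) :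
    f u' = f u + ε • (f w - f u) := by
  rw [h, map_add, map_smul, map_sub]

def projXYL : E3 →L[ℝ] E2 :=
  LinearMap.toContinuousLinearMap
    { toFun := projXY
      map_add' x y := by ext i; fin_cases i <;> rfl
      map_smul' c x := by ext i; fin_cases i <;> rfl }

lemma inner_projXY_of_apply_two_eq_zero (x : E3) {y : E3} (hy : y 2 = 0) :
    inner ℝ (projXY x) (projXY y) = inner ℝ x y := by
  simp [projXY, PiLp.inner_apply, Fin.sum_univ_three, Fin.sum_univ_two, hy]

lemma liftZ_add_smul_single (p : E2) (z c : ℝ) :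
    liftZ p z + c • EuclideanSpace.single 2 1 = liftZ p (z + c) := by
  ext i; fin_cases i <;> simp [liftZ]

lemma projXY_and_apply_two_of_mem {p : E2} {S : Set ℝ} {x : E3} (hx : x ∈ liftZ p '' S) :
    projXY x = p ∧ x 2 ∈ S := by
  obtain ⟨z, hz, rfl⟩ := hx
  exact ⟨by ext i; fin_cases i <;> rfl, hz⟩

lemma convexHull_liftZ_pair (p : E2) :
    convexHull ℝ {liftZ p 1, liftZ p (-1)} = liftZ p '' Set.Icc (-1) 1 := by
  ext x
  rw [convexHull_pair]
  constructor
  · rintro ⟨a, b, ha, hb, hab, rfl⟩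
    refine ⟨a - b, ⟨by linarith, by linarith⟩, ?_⟩
    ext i; fin_cases i <;> simp [liftZ, ← add_mul, hab, sub_eq_add_neg]
  · rintro ⟨z, ⟨hz₁, hz₂⟩, rfl⟩
    refine ⟨(1 + z) / 2, (1 - z) / 2, by linarith, by linarith, by ring, ?_⟩
    ext i; fin_cases i <;> simp [liftZ] <;> ring

lemma IsProj.apply_two_eq_of_liftZ {p : E2} {a b : ℝ} {u w : E3}
    (h : IsProj (liftZ p '' Set.Icc a b) u w) (hu : u 2 ∈ Set.Icc a b) : w 2 = u 2 := by
  obtain ⟨z, -, rfl⟩ := h.1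
  have hinner : inner ℝ (EuclideanSpace.single 2 1) (u - liftZ p z) = u 2 - z := by
    simp [EuclideanSpace.inner_single_left, liftZ]
  have hmem : liftZ p z + (u 2 - z) • EuclideanSpace.single 2 1 ∈ liftZ p '' Set.Icc a b := by
    rw [liftZ_add_smul_single, add_sub_cancel]
    exact ⟨_, hu, rfl⟩
  have := h.inner_eq_zero_of_add_smul_mem _ (hinner ▸ hmem)
  rw [hinner, sub_eq_zero] at this
  exact this.symm

lemma C1_eq : C1 = liftZ aPt '' Set.Icc (-1) 1 := by
  rw [← convexHull_liftZ_pair]; rfl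

lemma C2_eq : C2 = liftZ bPt '' Set.Icc (-1) 1 := by
  rw [← convexHull_liftZ_pair]; rfl

lemma apply_two_mem_of_mem_C3 {t : ℕ → ℝ} {x : E3} (hx : x ∈ C3 t) : x 2 ∈ Set.Icc (-1) 1 := by
  have hproj : IsLinearMap ℝ fun x : E3 => x 2 := ⟨fun _ _ => rfl, fun _ _ => rfl⟩
  have hslab : C3 t ⊆ (fun x : E3 => x 2) ⁻¹' Set.Icc (-1) 1 := by
    refine closure_minimal (convexHull_min ?_ ((convex_Icc _ _).is_linear_preimage hproj)) ?_
    · rintro _ ⟨k, -, rfl⟩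
      rcases neg_one_pow_eq_or ℝ k with hk | hk <;> simp [pSeq, hk]
    · exact isClosed_Icc.preimage (EuclideanSpace.proj (2 : Fin 3)).continuous
  exact hslab hx

lemma projXYL_image_pSeq (t : ℕ → ℝ) (s : Set ℕ) : projXYL '' (pSeq t '' s) = vSeq t '' s := by
  rw [← Set.image_comp]
  rfl

lemma IsCycleWithSupport.support₃_apply_two_eq {t : ℕ → ℝ} {ε : ℝ} {u₁ u₂ u₃ w₁ w₂ w₃ : E3}
    (hc : IsCycleWithSupport C1 C2 (C3 t) ε u₁ u₂ u₃ w₁ w₂ w₃) (hε : ε ∈ Set.Ioo (0 : ℝ) 1) :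
    w₃ 2 = u₂ 2 := by
  obtain ⟨hp₁, hp₂, hp₃, h₁, h₂, h₃⟩ := hc
  rw [C1_eq] at hp₁
  rw [C2_eq] at hp₂
  have height {u u' w : E3} (h : u' = u + ε • (w - u)) : u' 2 = u 2 + ε * (w 2 - u 2) := by
    subst h; rfl
  have hu₃ : u₃ 2 ∈ Set.Icc (-1) 1 :=
    mem_Icc_of_cycle (Set.Ioo_subset_Ioc_self hε) (height h₁) (height h₂) (height h₃)
      (projXY_and_apply_two_of_mem hp₁.1).2 (projXY_and_apply_two_of_mem hp₂.1).2
      (apply_two_mem_of_mem_C3 hp₃.1)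
  have hu₁ : u₁ 2 = u₃ 2 := by rw [height h₁, hp₁.apply_two_eq_of_liftZ hu₃]; ring
  have hu₂ : u₂ 2 = u₁ 2 := by rw [height h₂, hp₂.apply_two_eq_of_liftZ (hu₁ ▸ hu₃)]; ring
  have hstep : ε * (w₃ 2 - u₂ 2) = 0 := by linarith [height h₃]
  linarith [(mul_eq_zero.mp hstep).resolve_left hε.1.ne']

theorem stmt3_general (t : ℕ → ℝ) (ε : ℝ) (hε : ε ∈ Set.Ioo (0 : ℝ) 1)
    (u₁ u₂ u₃ w₁ w₂ w₃ : E3)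
    (hc : IsCycleWithSupport C1 C2 (C3 t) ε u₁ u₂ u₃ w₁ w₂ w₃) :
    IsCycleWithSupport C1' C2' (C3' t) ε (projXY u₁) (projXY u₂) (projXY u₃)
      (projXY w₁) (projXY w₂) (projXY w₃) := by
  have hw₃ := hc.support₃_apply_two_eq hε
  obtain ⟨hp₁, hp₂, hp₃, h₁, h₂, h₃⟩ := hc
  have hw₁ : projXY w₁ = aPt := (projXY_and_apply_two_of_mem (C1_eq ▸ hp₁.1)).1
  have hw₂ : projXY w₂ = bPt := (projXY_and_apply_two_of_mem (C2_eq ▸ hp₂.1)).1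
  have hp₃' : IsProj (C3' t) (projXY u₂) (projXY w₃) := by
    have hvert : (u₂ - w₃) 2 = 0 := by rw [PiLp.sub_apply, hw₃, sub_self]
    have := hp₃.map_closure_convexHull projXYL fun x => inner_projXY_of_apply_two_eq_zero x hvert
    rwa [projXYL_image_pSeq] at this
  exact ⟨hw₁ ▸ isProj_singleton _ _, hw₂ ▸ isProj_singleton _ _, hp₃',
    map_cycle_step projXYL.toLinearMap h₁, map_cycle_step projXYL.toLinearMap h₂,
    map_cycle_step projXYL.toLinearMap h₃⟩

theorem stmt3 (t : ℕ → ℝ) (ht : Admissible t) (ε : ℝ) (hε : ε ∈ Set.Ioo (0 : ℝ) 1)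
    (u₁ u₂ u₃ w₁ w₂ w₃ : E3)
    (hc : IsCycleWithSupport C1 C2 (C3 t) ε u₁ u₂ u₃ w₁ w₂ w₃) :
    IsCycleWithSupport C1' C2' (C3' t) ε (projXY u₁) (projXY u₂) (projXY u₃)
      (projXY w₁) (projXY w₂) (projXY w₃) :=
  stmt3_general t ε hε u₁ u₂ u₃ w₁ w₂ w₃ hc
end
end

section
/- Let k ≥ 1, let d_k = (v_{k+1} − v_k)/‖v_{k+1} − v_k‖, and let c = (1−s)v_k + s·v_{k+1} with s ∈ [0,1). Then ⟨a − c, d_k⟩ > 0, ⟨b − c, d_k⟩ < 0, and ⟨a − c, d_k⟩ + ⟨b − c, d_k⟩ > 0; consequently the quantity ε(c) = 1 + ⟨b − c, d_k⟩/⟨a − c, d_k⟩ is well defined and lies in the open interval (0,1). -/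
noncomputable section
open Real Filter

/-! Write `vₖ = (x, y)`, `vₖ₊₁ = (x', y')` and `c = (c₁, c₂)`. Since `π/4 ≤ tₖ < tₖ₊₁ ≤ π/2`,
we have `x' < x`, `y < y'`, `0 < c₁ ≤ c₂ ≤ 1` and `x' + y' < x + y`
(as `cos θ + sin θ = √2 cos (θ - π/4)`).
With `w = vₖ₊₁ - vₖ`, the three inner products are then sums of terms of known sign:
`⟨a - c, w⟩ = (2 + c₁)(x - x') + (2 - c₂)(y' - y)`,
`⟨b - c, w⟩ = (2 - c₂)((x' + y') - (x + y)) - (c₂ - c₁)(x - x')`,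
`⟨a - c, w⟩ + ⟨b - c, w⟩ = 2c₁(x - x') + 2(2 - c₂)(y' - y)`.
Normalising `w` multiplies them by `‖w‖⁻¹ > 0`, and `1 + B/A ∈ (0, 1)` whenever `A > 0 > B > -A`. -/

theorem Real.cos_add_sin_eq_sqrt_two_mul_cos (θ : ℝ) :
    cos θ + sin θ = √2 * cos (θ - π / 4) := by
  rw [cos_sub, cos_pi_div_four, sin_pi_div_four]
  ring_nf
  rw [Real.sq_sqrt zero_le_two]
  ring

theorem Real.sin_sub_cos_eq_sqrt_two_mul_sin (θ : ℝ) :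
    sin θ - cos θ = √2 * sin (θ - π / 4) := by
  rw [sin_sub, cos_pi_div_four, sin_pi_div_four]
  ring_nf
  rw [Real.sq_sqrt zero_le_two]
  ring

theorem Real.cos_le_sin_of_mem_Icc {θ : ℝ} (hθ : θ ∈ Set.Icc (π / 4) (5 * π / 4)) :
    cos θ ≤ sin θ := by
  have hsin : 0 ≤ sin (θ - π / 4) :=
    sin_nonneg_of_nonneg_of_le_pi (by linarith [hθ.1]) (by linarith [hθ.2])
  nlinarith [sin_sub_cos_eq_sqrt_two_mul_sin θ, Real.sqrt_nonneg 2]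

theorem Real.strictAntiOn_cos_add_sin :
    StrictAntiOn (fun θ => cos θ + sin θ) (Set.Icc (π / 4) (5 * π / 4)) := by
  intro α hα β hβ hαβ
  simp only [cos_add_sin_eq_sqrt_two_mul_cos]
  refine mul_lt_mul_of_pos_left ?_ (by positivity)
  exact cos_lt_cos_of_nonneg_of_le_pi (by linarith [hα.1]) (by linarith [hβ.2]) (by linarith)

theorem ip_smul_right {E : Type} [NormedAddCommGroup E] [InnerProductSpace ℝ E]
    (x y : E) (r : ℝ) : ip x (r • y) = r * ip x y :=
  real_inner_smul_right x y r

theorem ip_eq_E2 (x y : E2) : ip x y = x 0 * y 0 + x 1 * y 1 := by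
  simp only [ip, PiLp.inner_apply, Fin.sum_univ_two, RCLike.inner_apply, conj_trivial]
  ring

theorem one_add_div_mem_Ioo {A B : ℝ} (hA : 0 < A) (hB : B < 0) (hAB : 0 < A + B) :
    1 + B / A ∈ Set.Ioo (0 : ℝ) 1 := by
  constructor
  · rw [← div_self hA.ne', ← add_div]; positivity
  · linarith [div_neg_of_neg_of_pos hB hA]

theorem inner_chord_signs {t : ℕ → ℝ} {k : ℕ} {s : ℝ} (hs : s ∈ Set.Ico (0 : ℝ) 1)
    (h₀ : π / 4 ≤ t k) (h₁ : t k < t (k + 1)) (h₂ : t (k + 1) ≤ π / 2) :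
    let c : E2 := (1 - s) • vSeq t k + s • vSeq t (k + 1)
    let w : E2 := vSeq t (k + 1) - vSeq t k
    0 < ip (aPt - c) w ∧ ip (bPt - c) w < 0 ∧ 0 < ip (aPt - c) w + ip (bPt - c) w := by
  intro c w
  obtain ⟨hs₀, hs₁⟩ := hs
  have hπ := pi_pos
  have hcos : cos (t (k + 1)) < cos (t k) :=
    cos_lt_cos_of_nonneg_of_le_pi (by linarith) (by linarith) h₁
  have hsin : sin (t k) < sin (t (k + 1)) :=
    strictMonoOn_sin ⟨by linarith, by linarith⟩ ⟨by linarith, h₂⟩ h₁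
  have hcos₀ : 0 < cos (t k) := cos_pos_of_mem_Ioo ⟨by linarith, by linarith⟩
  have hcos₁ : 0 ≤ cos (t (k + 1)) := cos_nonneg_of_mem_Icc ⟨by linarith, h₂⟩
  have hcs₀ : cos (t k) ≤ sin (t k) := cos_le_sin_of_mem_Icc ⟨h₀, by linarith⟩
  have hcs₁ : cos (t (k + 1)) ≤ sin (t (k + 1)) :=
    cos_le_sin_of_mem_Icc ⟨by linarith, by linarith⟩
  have hsum : cos (t (k + 1)) + sin (t (k + 1)) < cos (t k) + sin (t k) :=
    strictAntiOn_cos_add_sin ⟨h₀, by linarith⟩ ⟨by linarith, by linarith⟩ h₁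
  have hsin₀ := sin_le_one (t k)
  have hsin₁ := sin_le_one (t (k + 1))
  simp only [ip_eq_E2, c, w, aPt, bPt, vSeq, PiLp.sub_apply, PiLp.add_apply, PiLp.smul_apply,
    smul_eq_mul, Matrix.cons_val_zero, Matrix.cons_val_one]
  set c₁ := (1 - s) * cos (t k) + s * cos (t (k + 1))
  set c₂ := (1 - s) * sin (t k) + s * sin (t (k + 1))
  have hc₁ : 0 < c₁ := by nlinarith
  have hc₁₂ : c₁ ≤ c₂ := by nlinarith
  have hc₂ : c₂ ≤ 1 := by nlinarith
  refine ⟨?_, ?_, ?_⟩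
  · nlinarith [mul_pos (show 0 < 2 + c₁ by linarith) (sub_pos.2 hcos),
      mul_pos (show 0 < 2 - c₂ by linarith) (sub_pos.2 hsin)]
  · nlinarith [mul_nonneg (sub_nonneg.2 hc₁₂) (sub_pos.2 hcos).le,
      mul_pos (show 0 < 2 - c₂ by linarith) (sub_pos.2 hsum)]
  · nlinarith [mul_pos hc₁ (sub_pos.2 hcos), mul_pos (show 0 < 2 - c₂ by linarith) (sub_pos.2 hsin)]

theorem Admissible.pi_div_four_le {t : ℕ → ℝ} (ht : Admissible t) {k : ℕ} (hk : 1 ≤ k) :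
    π / 4 ≤ t k :=
  ht.2.1 ▸ ht.1.monotoneOn Set.self_mem_Ici hk hk

theorem Admissible.le_pi_div_two {t : ℕ → ℝ} (ht : Admissible t) {k : ℕ} (hk : 1 ≤ k) :
    t k ≤ π / 2 :=
  ge_of_tendsto ht.2.2 <| eventually_atTop.2
    ⟨k, fun _ hm => ht.1.monotoneOn hk (hk.trans hm) hm⟩

theorem Admissible.lt_succ {t : ℕ → ℝ} (ht : Admissible t) {k : ℕ} (hk : 1 ≤ k) :
    t k < t (k + 1) :=
  ht.1 hk (hk.trans k.le_succ) k.lt_succ_self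

theorem stmt8 (t : ℕ → ℝ) (ht : Admissible t) (k : ℕ) (hk : 1 ≤ k)
    (s : ℝ) (hs : s ∈ Set.Ico (0 : ℝ) 1) :
    let d : E2 := ‖vSeq t (k + 1) - vSeq t k‖⁻¹ • (vSeq t (k + 1) - vSeq t k)
    let c : E2 := (1 - s) • vSeq t k + s • vSeq t (k + 1)
    0 < ip (aPt - c) d ∧ ip (bPt - c) d < 0 ∧ 0 < ip (aPt - c) d + ip (bPt - c) d ∧
      1 + ip (bPt - c) d / ip (aPt - c) d ∈ Set.Ioo (0 : ℝ) 1 := by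
  intro d c
  obtain ⟨hA, hB, hAB⟩ := inner_chord_signs hs (ht.pi_div_four_le hk) (ht.lt_succ hk)
    (ht.le_pi_div_two (hk.trans k.le_succ))
  set w := vSeq t (k + 1) - vSeq t k
  have hw : w ≠ 0 := by
    rintro hw
    simp [hw, ip] at hA
  have hr : 0 < ‖w‖⁻¹ := by positivity
  have hA' : 0 < ip (aPt - c) d := by rw [ip_smul_right]; exact mul_pos hr hA
  have hB' : ip (bPt - c) d < 0 := by rw [ip_smul_right]; exact mul_neg_of_pos_of_neg hr hB
  have hAB' : 0 < ip (aPt - c) d + ip (bPt - c) d := by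
    rw [ip_smul_right, ip_smul_right, ← mul_add]; exact mul_pos hr hAB
  exact ⟨hA', hB', hAB', one_add_div_mem_Ioo hA' hB' hAB'⟩
end
end

section
/- Let k ≥ 1, let d_k = (v_{k+1} − v_k)/‖v_{k+1} − v_k‖, and for s ∈ [0,1) set ε_k(s) = 1 + ⟨b − c(s), d_k⟩/⟨a − c(s), d_k⟩ where c(s) = (1−s)v_k + s·v_{k+1}. Then: (i) for each k the function s ↦ ε_k(s) is strictly decreasing on [0,1); and (ii) the suprema over the segments tend to zero, i.e. ε_k(0) → 0 as k → ∞. -/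
noncomputable section
open Real Filter

/-!
Put `d = v_{k+1} - v_k` and `c(s) = (1 - s) v_k + s v_{k+1}`. Normalising `d` scales numerator
and denominator by the same factor, and the two differ by the constant `⟨b - a, d⟩ =
4 (cos t_{k+1} - cos t_k) < 0`, so `ε_k(s) = 2 + ⟨b - a, d⟩ / ⟨a - c(s), d⟩`, where the
denominator is positive and decreases linearly in `s`. At `s = 0`, since `v_k` and `v_{k+1}` are
unit vectors, `⟨v_k, d⟩ ≤ 0`, i.e. `sin t_k · Δsin ≤ cos t_k · (-Δcos)`: the chords flatten as
`t_k → π/2`, and this gives `0 ≤ ε_k(0) ≤ 4 cos t_k → 0`.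
-/

open RealInnerProductSpace

section Chord

variable {E : Type} [NormedAddCommGroup E] [InnerProductSpace ℝ E]

def chordEps (a b v w : E) (s : ℝ) : ℝ :=
  1 + ⟪b - ((1 - s) • v + s • w), w - v⟫ / ⟪a - ((1 - s) • v + s • w), w - v⟫

lemma normalized_eq_chordEps (a b v w : E) (s : ℝ) :
    1 + ip (b - ((1 - s) • v + s • w)) (‖w - v‖⁻¹ • (w - v)) /
        ip (a - ((1 - s) • v + s • w)) (‖w - v‖⁻¹ • (w - v)) = chordEps a b v w s := by
  by_cases hvw : w - v = 0
  · simp [chordEps, ip, hvw]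
  · have hnorm : ‖w - v‖⁻¹ ≠ 0 := inv_ne_zero (norm_ne_zero_iff.2 hvw)
    simp only [ip, real_inner_smul_right, mul_div_mul_left _ _ hnorm, chordEps]

lemma inner_sub_convexComb (a v w u : E) (s : ℝ) :
    ⟪a - ((1 - s) • v + s • w), u⟫ = (1 - s) * ⟪a - v, u⟫ + s * ⟪a - w, u⟫ := by
  have : a - ((1 - s) • v + s • w) = (1 - s) • (a - v) + s • (a - w) := by
    simp only [smul_sub, sub_smul, one_smul]; abel
  rw [this, inner_add_left, real_inner_smul_left, real_inner_smul_left]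

theorem chordEps_strictAntiOn {a b v w : E} (hab : ⟪b - a, w - v⟫ < 0)
    (haw : 0 ≤ ⟪a - w, w - v⟫) (hvw : v ≠ w) :
    StrictAntiOn (chordEps a b v w) (Set.Ico 0 1) := by
  set D : ℝ → ℝ := fun s => ⟪a - ((1 - s) • v + s • w), w - v⟫
  have hD : ∀ s, D s = ⟪a - w, w - v⟫ + (1 - s) * ‖w - v‖ ^ 2 := by
    intro s
    have : ⟪a - v, w - v⟫ = ⟪a - w, w - v⟫ + ‖w - v‖ ^ 2 := by
      rw [← real_inner_self_eq_norm_sq, ← inner_add_left]; abel_nf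
    simp only [D, inner_sub_convexComb, this]; ring
  have hd : 0 < ‖w - v‖ ^ 2 := by positivity [sub_ne_zero.2 hvw.symm]
  have hD_pos : ∀ s ∈ Set.Ico (0 : ℝ) 1, 0 < D s := fun s hs => by
    rw [hD]; nlinarith [hs.2]
  have hε : ∀ s ∈ Set.Ico (0 : ℝ) 1, chordEps a b v w s = 2 + ⟪b - a, w - v⟫ / D s := by
    intro s hs
    have hb : ⟪b - ((1 - s) • v + s • w), w - v⟫ = ⟪b - a, w - v⟫ + D s := by
      rw [← inner_add_left]; abel_nf
    rw [chordEps, hb, add_div, div_self (hD_pos s hs).ne']; ring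
  intro s₁ hs₁ s₂ hs₂ h12
  rw [hε s₁ hs₁, hε s₂ hs₂, add_lt_add_iff_left, ← neg_lt_neg_iff, ← neg_div, ← neg_div]
  refine div_lt_div_of_pos_left (neg_pos.2 hab) (hD_pos s₂ hs₂) ?_
  rw [hD, hD]; nlinarith

end Chord

namespace Admissible

variable {t : ℕ → ℝ} {k : ℕ}

lemma lt_succ_s9 (ht : Admissible t) (hk : 1 ≤ k) : t k < t (k + 1) :=
  ht.1 hk (Set.mem_Ici.2 (by omega)) (Nat.lt_succ_self k)

lemma pi_div_four_le_s9 (ht : Admissible t) (hk : 1 ≤ k) : π / 4 ≤ t k :=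
  ht.2.1 ▸ ht.1.monotoneOn (Set.mem_Ici.2 le_rfl) hk hk

lemma lt_pi_div_two (ht : Admissible t) (hk : 1 ≤ k) : t k < π / 2 := by
  have hle : t (k + 1) ≤ π / 2 :=
    ge_of_tendsto ht.2.2 (eventually_atTop.2 ⟨k + 1, fun j hj =>
      ht.1.monotoneOn (Set.mem_Ici.2 (by omega)) (Set.mem_Ici.2 (by omega)) hj⟩)
  exact (ht.lt_succ_s9 hk).trans_le hle

lemma cos_succ_lt (ht : Admissible t) (hk : 1 ≤ k) : cos (t (k + 1)) < cos (t k) :=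
  cos_lt_cos_of_nonneg_of_le_pi (by linarith [ht.pi_div_four_le_s9 hk, pi_pos])
    (by linarith [ht.lt_pi_div_two (k := k + 1) (by omega), pi_pos]) (ht.lt_succ_s9 hk)

lemma sin_lt_sin_succ (ht : Admissible t) (hk : 1 ≤ k) : sin (t k) < sin (t (k + 1)) :=
  sin_lt_sin_of_lt_of_le_pi_div_two (by linarith [ht.pi_div_four_le_s9 hk, pi_pos])
    (ht.lt_pi_div_two (k := k + 1) (by omega)).le (ht.lt_succ_s9 hk)

lemma cos_pos (ht : Admissible t) (hk : 1 ≤ k) : 0 < cos (t k) :=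
  cos_pos_of_mem_Ioo ⟨by linarith [ht.pi_div_four_le_s9 hk, pi_pos], ht.lt_pi_div_two hk⟩

lemma one_half_le_sin (ht : Admissible t) (hk : 1 ≤ k) : 1 / 2 ≤ sin (t k) := by
  have h : sin (π / 4) ≤ sin (t k) :=
    sin_le_sin_of_le_of_le_pi_div_two (by linarith [pi_pos]) (ht.lt_pi_div_two hk).le
      (ht.pi_div_four_le_s9 hk)
  rw [sin_pi_div_four] at h
  linarith [one_lt_sqrt_two]

end Admissible

lemma inner_sub_vSeq (p : E2) (t : ℕ → ℝ) (i j : ℕ) :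
    ⟪p, vSeq t j - vSeq t i⟫ = p 0 * (cos (t j) - cos (t i)) + p 1 * (sin (t j) - sin (t i)) := by
  simp [vSeq, PiLp.inner_apply, Fin.sum_univ_two, mul_comm]

lemma strictAntiOn_chordEps_vSeq {t : ℕ → ℝ} (ht : Admissible t) {k : ℕ} (hk : 1 ≤ k) :
    StrictAntiOn (chordEps aPt bPt (vSeq t k) (vSeq t (k + 1))) (Set.Ico 0 1) := by
  have hcos := ht.cos_succ_lt hk
  have hsin := ht.sin_lt_sin_succ hk
  refine chordEps_strictAntiOn ?_ ?_ ?_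
  · rw [inner_sub_vSeq]
    simp only [aPt, bPt, PiLp.sub_apply, Matrix.cons_val_zero, Matrix.cons_val_one]
    linarith
  · rw [inner_sub_vSeq]
    simp only [aPt, vSeq, PiLp.sub_apply, Matrix.cons_val_zero, Matrix.cons_val_one]
    nlinarith [neg_one_le_cos (t (k + 1)), sin_le_one (t (k + 1))]
  · intro h
    have := congrArg (· 0) h
    simp only [vSeq, Matrix.cons_val_zero] at this
    linarith

lemma chordEps_vSeq_zero_mem_Icc {t : ℕ → ℝ} (ht : Admissible t) {k : ℕ} (hk : 1 ≤ k) :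
    chordEps aPt bPt (vSeq t k) (vSeq t (k + 1)) 0 ∈ Set.Icc 0 (4 * cos (t k)) := by
  have hx := sub_pos.2 (ht.cos_succ_lt hk)
  have hy := sub_pos.2 (ht.sin_lt_sin_succ hk)
  have hc := ht.cos_pos hk
  have hs := ht.one_half_le_sin hk
  have hs1 := sin_le_one (t k)
  have hchord : sin (t k) * (sin (t (k + 1)) - sin (t k)) ≤
      cos (t k) * (cos (t k) - cos (t (k + 1))) := by
    nlinarith [cos_sub (t (k + 1)) (t k), cos_le_one (t (k + 1) - t k), sin_sq_add_cos_sq (t k)]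
  have hD : 0 < (-2 - cos (t k)) * (cos (t (k + 1)) - cos (t k)) +
      (2 - sin (t k)) * (sin (t (k + 1)) - sin (t k)) := by
    nlinarith [mul_pos (by linarith : 0 < 2 + cos (t k)) hx,
      mul_pos (by linarith : 0 < 2 - sin (t k)) hy]
  simp only [chordEps, sub_zero, zero_smul, one_smul, add_zero, inner_sub_vSeq]
  simp only [aPt, bPt, vSeq, PiLp.sub_apply, Matrix.cons_val_zero, Matrix.cons_val_one]
  rw [one_add_div hD.ne', Set.mem_Icc, div_le_iff₀ hD]
  constructor
  · apply div_nonneg _ hD.le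
    nlinarith
  · nlinarith

theorem stmt9 (t : ℕ → ℝ) (ht : Admissible t) :
    let εf : ℕ → ℝ → ℝ := fun k s =>
      1 + ip (bPt - ((1 - s) • vSeq t k + s • vSeq t (k + 1)))
            (‖vSeq t (k + 1) - vSeq t k‖⁻¹ • (vSeq t (k + 1) - vSeq t k)) /
          ip (aPt - ((1 - s) • vSeq t k + s • vSeq t (k + 1)))
            (‖vSeq t (k + 1) - vSeq t k‖⁻¹ • (vSeq t (k + 1) - vSeq t k))
    (∀ k, 1 ≤ k → StrictAntiOn (εf k) (Set.Ico 0 1)) ∧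
      Tendsto (fun k => εf k 0) atTop (nhds 0) := by
  intro εf
  have hεf : εf = fun k => chordEps aPt bPt (vSeq t k) (vSeq t (k + 1)) :=
    funext fun k => funext (normalized_eq_chordEps _ _ _ _)
  rw [hεf]
  refine ⟨fun k hk => strictAntiOn_chordEps_vSeq ht hk, ?_⟩
  have hcos : Tendsto (fun k => 4 * cos (t k)) atTop (nhds 0) := by
    simpa [cos_pi_div_two] using ((continuous_cos.tendsto _).comp ht.2.2).const_mul 4
  refine tendsto_of_tendsto_of_tendsto_of_le_of_le' tendsto_const_nhds hcos ?_ ?_ <;>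
    filter_upwards [eventually_ge_atTop 1] with k hk
  exacts [(chordEps_vSeq_zero_mem_Icc ht hk).1, (chordEps_vSeq_zero_mem_Icc ht hk).2]
end
end

section
/- Let C₁, C₂, C₃ be nonempty closed convex subsets of a Euclidean space, let ε ∈ (0,1], and let (u₁,u₂,u₃) be an ε-cycle for (C₁,C₂,C₃) with support (w₁,w₂,w₃). Then u₁ = ((1−ε)²w₂ + (1−ε)w₃ + w₁)/(ε²−3ε+3), u₂ = ((1−ε)²w₃ + (1−ε)w₁ + w₂)/(ε²−3ε+3), and u₃ = ((1−ε)²w₁ + (1−ε)w₂ + w₃)/(ε²−3ε+3). -/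
noncomputable section
open Real Filter

/-!
Each relaxed step is `u ↦ (1 - ε) u + ε w`, so one turn around the cycle gives
`u₁ = (1 - ε)³ u₁ + ε ((1 - ε)² w₂ + (1 - ε) w₃ + w₁)`. Since `1 - (1 - ε)³ = ε (ε² - 3ε + 3)`,
cancelling `ε` yields the formula for `u₁`; the others follow by rotating the indices.
-/

theorem smul_eq_of_relaxed_cycle {K V : Type*} [CommRing K] [IsDomain K] [AddCommGroup V]
    [Module K V] [Module.IsTorsionFree K V] {ε : K} (hε : ε ≠ 0) {u₁ u₂ u₃ w₁ w₂ w₃ : V}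
    (h₁ : u₁ = u₃ + ε • (w₁ - u₃)) (h₂ : u₂ = u₁ + ε • (w₂ - u₁))
    (h₃ : u₃ = u₂ + ε • (w₃ - u₂)) :
    (ε ^ 2 - 3 * ε + 3) • u₁ = (1 - ε) ^ 2 • w₂ + (1 - ε) • w₃ + w₁ := by
  apply smul_right_injective V hε
  linear_combination (norm := module) h₁ + (1 - ε) • h₃ + (1 - ε) ^ 2 • h₂

theorem sq_sub_three_mul_add_three_pos (ε : ℝ) : 0 < ε ^ 2 - 3 * ε + 3 := by
  nlinarith [sq_nonneg (ε - 3 / 2)]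

theorem stmt10_general {E : Type} [NormedAddCommGroup E] [InnerProductSpace ℝ E]
    (C₁ C₂ C₃ : Set E)
    (ε : ℝ) (hε : ε ∈ Set.Ioc (0 : ℝ) 1) (u₁ u₂ u₃ w₁ w₂ w₃ : E)
    (hc : IsCycleWithSupport C₁ C₂ C₃ ε u₁ u₂ u₃ w₁ w₂ w₃) :
    u₁ = (ε ^ 2 - 3 * ε + 3)⁻¹ • ((1 - ε) ^ 2 • w₂ + (1 - ε) • w₃ + w₁) ∧
    u₂ = (ε ^ 2 - 3 * ε + 3)⁻¹ • ((1 - ε) ^ 2 • w₃ + (1 - ε) • w₁ + w₂) ∧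
    u₃ = (ε ^ 2 - 3 * ε + 3)⁻¹ • ((1 - ε) ^ 2 • w₁ + (1 - ε) • w₂ + w₃) := by
  obtain ⟨-, -, -, e₁, e₂, e₃⟩ := hc
  have hε₀ : ε ≠ 0 := hε.1.ne'
  have hd : ε ^ 2 - 3 * ε + 3 ≠ 0 := (sq_sub_three_mul_add_three_pos ε).ne'
  refine ⟨?_, ?_, ?_⟩ <;> rw [eq_inv_smul_iff₀ hd]
  · exact smul_eq_of_relaxed_cycle hε₀ e₁ e₂ e₃
  · exact smul_eq_of_relaxed_cycle hε₀ e₂ e₃ e₁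
  · exact smul_eq_of_relaxed_cycle hε₀ e₃ e₁ e₂

theorem stmt10 {E : Type} [NormedAddCommGroup E] [InnerProductSpace ℝ E]
    [FiniteDimensional ℝ E] (C₁ C₂ C₃ : Set E)
    (h₁ : C₁.Nonempty ∧ IsClosed C₁ ∧ Convex ℝ C₁)
    (h₂ : C₂.Nonempty ∧ IsClosed C₂ ∧ Convex ℝ C₂)
    (h₃ : C₃.Nonempty ∧ IsClosed C₃ ∧ Convex ℝ C₃)
    (ε : ℝ) (hε : ε ∈ Set.Ioc (0 : ℝ) 1) (u₁ u₂ u₃ w₁ w₂ w₃ : E)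
    (hc : IsCycleWithSupport C₁ C₂ C₃ ε u₁ u₂ u₃ w₁ w₂ w₃) :
    u₁ = (ε ^ 2 - 3 * ε + 3)⁻¹ • ((1 - ε) ^ 2 • w₂ + (1 - ε) • w₃ + w₁) ∧
    u₂ = (ε ^ 2 - 3 * ε + 3)⁻¹ • ((1 - ε) ^ 2 • w₃ + (1 - ε) • w₁ + w₂) ∧
    u₃ = (ε ^ 2 - 3 * ε + 3)⁻¹ • ((1 - ε) ^ 2 • w₁ + (1 - ε) • w₂ + w₃) :=
  stmt10_general C₁ C₂ C₃ ε hε u₁ u₂ u₃ w₁ w₂ w₃ hc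
end
end

section
/- For the sets C₁, C₂, C₃ in ℝ³ defined from any admissible sequence (t_k), the set of least-squares solutions S = argmin_{u∈ℝ³} (d(u,C₁)² + d(u,C₂)² + d(u,C₃)²) equals the vertical segment {(0, 5/3, z) : |z| ≤ 1}. -/
noncomputable section
open Real Filter

/-!
Since `C₁` and `C₂` are the vertical segments over `(∓2, 2)` and `C₃` lies in the half-space
`y ≤ 1`, the objective at `(x, y, z)` is at least
`(x + 2)² + (x - 2)² + 2 (y - 2)² + 2 (|z| - 1)₊² + (y - 1)₊²`,
which is `≥ 26/3 + 2x² + (y - 5/3)² + 2 (|z| - 1)₊²`.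
Conversely, the points `p_{2k}` and `p_{2k+1}` accumulate at `(0, 1, 1)` and `(0, 1, -1)`, so `C₃`
contains the segment `{(0, 1, z) : |z| ≤ 1}`, and the value `26/3` is attained exactly on
`{(0, 5/3, z) : |z| ≤ 1}`.
-/

open Metric Topology

lemma le_infDist_sq {α : Type*} [PseudoMetricSpace α] {s : Set α} (hs : s.Nonempty) {x : α}
    {r : ℝ} (h : ∀ y ∈ s, r ≤ dist x y ^ 2) : r ≤ infDist x s ^ 2 := by
  rw [← Real.sqrt_le_left infDist_nonneg, le_infDist hs]
  exact fun y hy => (Real.sqrt_le_left dist_nonneg).2 (h y hy)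

lemma max_sub_sq_le_infDist_sq {ι : Type*} [Fintype ι] {s : Set (EuclideanSpace ℝ ι)}
    (hs : s.Nonempty) {i : ι} {r : ℝ} (hsr : ∀ c ∈ s, c i ≤ r)
    (x : EuclideanSpace ℝ ι) : max (x i - r) 0 ^ 2 ≤ infDist x s ^ 2 := by
  refine le_infDist_sq hs fun c hc =>
    pow_le_pow_left₀ (le_max_right _ _) (max_le ?_ dist_nonneg) 2
  calc x i - r ≤ dist (x i) (c i) := by
        rw [Real.dist_eq]; linarith [hsr c hc, le_abs_self (x i - c i)]
    _ ≤ dist x c := PiLp.dist_apply_le x c i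

lemma dist_sq_eq_fin_three (x y : EuclideanSpace ℝ (Fin 3)) :
    dist x y ^ 2 = (x 0 - y 0) ^ 2 + (x 1 - y 1) ^ 2 + (x 2 - y 2) ^ 2 := by
  simp [EuclideanSpace.dist_sq_eq, Fin.sum_univ_three, Real.dist_eq, sq_abs]

def verticalSegment (a b : ℝ) : Set E3 := {c | c 0 = a ∧ c 1 = b ∧ |c 2| ≤ 1}

lemma convexHull_pair_eq_verticalSegment (a b : ℝ) :
    convexHull ℝ {WithLp.toLp 2 ![a, b, 1], WithLp.toLp 2 ![a, b, -1]} = verticalSegment a b := by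
  ext c
  rw [convexHull_pair, segment_eq_image]
  constructor
  · rintro ⟨θ, ⟨hθ₀, hθ₁⟩, rfl⟩
    refine ⟨by simp; ring, by simp; ring, abs_le.2 ⟨?_, ?_⟩⟩ <;> simp <;> linarith
  · rintro ⟨h₀, h₁, h₂⟩
    rw [abs_le] at h₂
    refine ⟨(1 - c 2) / 2, ⟨by linarith, by linarith⟩, ?_⟩
    ext i
    fin_cases i <;> simp [h₀, h₁] <;> ring

lemma C1_eq_verticalSegment : C1 = verticalSegment (-2) 2 :=
  convexHull_pair_eq_verticalSegment _ _

lemma C2_eq_verticalSegment : C2 = verticalSegment 2 2 :=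
  convexHull_pair_eq_verticalSegment _ _

lemma le_infDist_verticalSegment_sq (a b : ℝ) (x : E3) :
    (x 0 - a) ^ 2 + (x 1 - b) ^ 2 + max (|x 2| - 1) 0 ^ 2 ≤
      infDist x (verticalSegment a b) ^ 2 := by
  refine le_infDist_sq ⟨WithLp.toLp 2 ![a, b, 0], by simp [verticalSegment]⟩ ?_
  rintro c ⟨h₀, h₁, h₂⟩
  have hz : max (|x 2| - 1) 0 ≤ |x 2 - c 2| :=
    max_le (by linarith [abs_sub_abs_le_abs_sub (x 2) (c 2)]) (abs_nonneg _)
  rw [dist_sq_eq_fin_three, h₀, h₁, ← sq_abs (x 2 - c 2)]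
  linarith [pow_le_pow_left₀ (le_max_right _ _) hz 2]

lemma infDist_verticalSegment_sq_le (a b : ℝ) {x : E3} (hx : |x 2| ≤ 1) :
    infDist x (verticalSegment a b) ^ 2 ≤ (x 0 - a) ^ 2 + (x 1 - b) ^ 2 := by
  have hmem : WithLp.toLp 2 ![a, b, x 2] ∈ verticalSegment a b := by simpa [verticalSegment]
  calc infDist x (verticalSegment a b) ^ 2 ≤ dist x (WithLp.toLp 2 ![a, b, x 2]) ^ 2 :=
        pow_le_pow_left₀ infDist_nonneg (infDist_le_dist_of_mem hmem) 2
    _ = (x 0 - a) ^ 2 + (x 1 - b) ^ 2 := by simp [dist_sq_eq_fin_three]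

section C3

variable (t : ℕ → ℝ)

lemma C3_nonempty : (C3 t).Nonempty :=
  ⟨pSeq t 1, subset_closure (subset_convexHull ℝ _ ⟨1, by simp, rfl⟩)⟩

lemma C3_subset_setOf_apply_one_le_one : C3 t ⊆ {c | c 1 ≤ 1} := by
  refine closure_minimal (convexHull_min ?_ ?_) ?_
  · rintro c ⟨k, -, rfl⟩
    simpa [pSeq] using Real.sin_le_one (t k)
  · exact convex_halfSpace_le ⟨fun _ _ => rfl, fun _ _ => rfl⟩ 1
  · exact isClosed_le (EuclideanSpace.proj (1 : Fin 3)).continuous continuous_const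

variable {t}

lemma tendsto_pSeq_two_mul_add (ht : Tendsto t atTop (𝓝 (π / 2))) (c : ℕ) :
    Tendsto (fun k => pSeq t (2 * k + c)) atTop (𝓝 (WithLp.toLp 2 ![0, 1, (-1) ^ c])) := by
  have hφ : Tendsto (fun k => t (2 * k + c)) atTop (𝓝 (π / 2)) :=
    ht.comp (tendsto_atTop_atTop.2 fun b => ⟨b, fun a ha => by omega⟩)
  refine ((PiLp.continuous_toLp 2 _).tendsto _).comp (tendsto_pi_nhds.2 fun i => ?_)
  fin_cases i
  · simpa [pSeq, Function.comp_def] using (Real.continuous_cos.tendsto _).comp hφ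
  · simpa [pSeq, Function.comp_def] using (Real.continuous_sin.tendsto _).comp hφ
  · simp [pow_add, pow_mul]

lemma verticalSegment_subset_C3 (ht : Tendsto t atTop (𝓝 (π / 2))) :
    verticalSegment 0 1 ⊆ C3 t := by
  have hlim (c : ℕ) (hc : 1 ≤ c) : WithLp.toLp 2 ![0, 1, (-1) ^ c] ∈ C3 t :=
    mem_closure_of_tendsto (tendsto_pSeq_two_mul_add ht c)
      (Eventually.of_forall fun k => subset_convexHull ℝ _ ⟨2 * k + c, by simp; omega, rfl⟩)
  rw [← convexHull_pair_eq_verticalSegment]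
  refine convexHull_min (Set.pair_subset ?_ ?_) (convex_convexHull ℝ _).closure
  · simpa using hlim 2 (by norm_num)
  · simpa using hlim 1 le_rfl

end C3

def lsObjective (t : ℕ → ℝ) (x : E3) : ℝ :=
  infDist x C1 ^ 2 + infDist x C2 ^ 2 + infDist x (C3 t) ^ 2

lemma sq_sub_five_thirds_add_le (b : ℝ) :
    (b - 5 / 3) ^ 2 + 2 / 3 ≤ 2 * (b - 2) ^ 2 + max (b - 1) 0 ^ 2 := by
  rcases le_total 1 b with hb | hb
  · rw [max_eq_left (by linarith)]
    nlinarith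
  · rw [max_eq_right (by linarith)]
    nlinarith

lemma lsObjective_lower_bound (t : ℕ → ℝ) (x : E3) :
    26 / 3 + 2 * x 0 ^ 2 + (x 1 - 5 / 3) ^ 2 + 2 * max (|x 2| - 1) 0 ^ 2 ≤ lsObjective t x := by
  have h₁ := le_infDist_verticalSegment_sq (-2) 2 x
  have h₂ := le_infDist_verticalSegment_sq 2 2 x
  have h₃ := max_sub_sq_le_infDist_sq (C3_nonempty t) (C3_subset_setOf_apply_one_le_one t) x
  rw [← C1_eq_verticalSegment] at h₁
  rw [← C2_eq_verticalSegment] at h₂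
  unfold lsObjective
  linear_combination h₁ + h₂ + h₃ + sq_sub_five_thirds_add_le (x 1)

lemma lsObjective_le_of_mem_verticalSegment {t : ℕ → ℝ} (ht : Tendsto t atTop (𝓝 (π / 2)))
    {u : E3} (hu : u ∈ verticalSegment 0 (5 / 3)) : lsObjective t u ≤ 26 / 3 := by
  obtain ⟨h₀, h₁, h₂⟩ := hu
  have d₁ := infDist_verticalSegment_sq_le (-2) 2 h₂
  have d₂ := infDist_verticalSegment_sq_le 2 2 h₂
  have d₃ : infDist u (C3 t) ^ 2 ≤ infDist u (verticalSegment 0 1) ^ 2 :=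
    pow_le_pow_left₀ infDist_nonneg (infDist_le_infDist_of_subset (verticalSegment_subset_C3 ht)
      ⟨WithLp.toLp 2 ![0, 1, 0], by simp [verticalSegment]⟩) 2
  have d₄ := infDist_verticalSegment_sq_le 0 1 h₂
  rw [h₀, h₁] at d₁ d₂ d₄
  rw [lsObjective, C1_eq_verticalSegment, C2_eq_verticalSegment]
  linarith

lemma mem_verticalSegment_of_lsObjective_le {t : ℕ → ℝ} {x : E3}
    (h : lsObjective t x ≤ 26 / 3) : x ∈ verticalSegment 0 (5 / 3) := by
  have hlb := lsObjective_lower_bound t x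
  have := sq_nonneg (x 0)
  have := sq_nonneg (x 1 - 5 / 3)
  have := sq_nonneg (max (|x 2| - 1) 0)
  have h₀ : x 0 = 0 := pow_eq_zero_iff two_ne_zero |>.1 (by linarith)
  have h₁ : x 1 - 5 / 3 = 0 := pow_eq_zero_iff two_ne_zero |>.1 (by linarith)
  have h₂ : max (|x 2| - 1) 0 = 0 := pow_eq_zero_iff two_ne_zero |>.1 (by linarith)
  exact ⟨h₀, by linarith, by linarith [le_max_left (|x 2| - 1) 0]⟩

theorem stmt14 (t : ℕ → ℝ) (ht : Admissible t) :
    {u : E3 | ∀ x : E3,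
        Metric.infDist u C1 ^ 2 + Metric.infDist u C2 ^ 2 + Metric.infDist u (C3 t) ^ 2 ≤
        Metric.infDist x C1 ^ 2 + Metric.infDist x C2 ^ 2 + Metric.infDist x (C3 t) ^ 2} =
      {u : E3 | u 0 = 0 ∧ u 1 = 5 / 3 ∧ |u 2| ≤ 1} := by
  obtain ⟨-, -, hlim⟩ := ht
  change {u | ∀ x, lsObjective t u ≤ lsObjective t x} = verticalSegment 0 (5 / 3)
  ext u
  constructor
  · intro hu
    have hmem : WithLp.toLp 2 ![0, 5 / 3, 0] ∈ verticalSegment 0 (5 / 3) := by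
      simp [verticalSegment]
    exact mem_verticalSegment_of_lsObjective_le
      ((hu _).trans (lsObjective_le_of_mem_verticalSegment hlim hmem))
  · intro hu x
    calc lsObjective t u ≤ 26 / 3 := lsObjective_le_of_mem_verticalSegment hlim hu
      _ ≤ lsObjective t x := by
        linarith [lsObjective_lower_bound t x, sq_nonneg (x 0), sq_nonneg (x 1 - 5 / 3),
          sq_nonneg (max (|x 2| - 1) 0)]
end
end

section
/- For every k ≥ 1, the point p_k = (cos t_k, sin t_k, (−1)^k) is an extreme point of C₃, the closed convex hull of {p_j : j ≥ 1}. -/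
noncomputable section
open Real Filter

/-!
All the points `pₖ` lie on the sphere of radius `√2` about the origin, so `C₃` lies in the closed
ball of that radius. In a Euclidean space the closed ball is strictly convex, so each point of the
sphere is an extreme point of the ball, and hence of every subset of the ball containing it.
-/

open Metric

theorem mem_extremePoints_of_subset_closedBall {E : Type*} [NormedAddCommGroup E]
    [NormedSpace ℝ E] [StrictConvexSpace ℝ E] {K : Set E} {c p : E} {r : ℝ}
    (hK : K ⊆ closedBall c r) (hpK : p ∈ K) (hp : p ∈ sphere c r) :
    p ∈ Set.extremePoints ℝ K := by
  rcases eq_or_ne r 0 with rfl | hr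
  · rw [closedBall_zero] at hK
    rw [sphere_zero] at hp
    subst hp
    exact mem_extremePoints.2 ⟨hpK, fun x hx y hy _ ↦ ⟨hK hx, hK hy⟩⟩
  · exact inter_extremePoints_subset_extremePoints_of_subset hK
      ⟨hpK, StrictConvexSpace.sphere_subset_extremePoints_closedBall c hr hp⟩

theorem norm_pSeq (t : ℕ → ℝ) (k : ℕ) : ‖pSeq t k‖ = √2 := by
  rw [EuclideanSpace.norm_eq, Fin.sum_univ_three]
  congr 1
  simp [pSeq, one_add_one_eq_two]

theorem C3_subset_closedBall (t : ℕ → ℝ) : C3 t ⊆ closedBall 0 √2 := by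
  refine closure_minimal (convexHull_min ?_ (convex_closedBall 0 √2)) isClosed_closedBall
  rintro _ ⟨k, -, rfl⟩
  simp [norm_pSeq]

theorem stmt16_general (t : ℕ → ℝ) (k : ℕ) (hk : 1 ≤ k) :
    pSeq t k ∈ Set.extremePoints ℝ (C3 t) :=
  mem_extremePoints_of_subset_closedBall (C3_subset_closedBall t)
    (subset_closure (subset_convexHull ℝ _ ⟨k, hk, rfl⟩)) (by simp [norm_pSeq])

theorem stmt16 (t : ℕ → ℝ) (ht : Admissible t) (k : ℕ) (hk : 1 ≤ k) :
    pSeq t k ∈ Set.extremePoints ℝ (C3 t) :=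
  stmt16_general t k hk
end
end
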